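/- Let G be a finite simple graph not containing K_4 as a minor, and let C be a cycle in G with four vertices v1, v2, v3, v4 appearing in this cyclic order on C. Then it is not the case that there exist both a path in G between v1 and v3 and a path in G between v2 and v4, each internally disjoint from C and from each other. -/

import Mathlib

/-!
If such paths existed, take as branch sets the four arcs of `C` starting at `v₁, v₂, v₃, v₄`,
the first two extended by `P` and `Q` without their last vertex. Consecutive arcs are joined by
edges of `C`, and the last edges of `P` and `Q` join the two opposite pairs, so `G` would have a
`K₄` minor.
-/

/-- `H` is a minor of `G`: there are pairwise disjoint nonempty connected branch
sets in `G`, one for each vertex of `H`, with an edge of `G` between the branch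
sets of any two adjacent vertices of `H`. -/
def IsGraphMinor {W V : Type*} (H : SimpleGraph W) (G : SimpleGraph V) : Prop :=
  ∃ f : W → Set V,
    (∀ w, (f w).Nonempty) ∧
    (∀ w, (G.induce (f w)).Connected) ∧
    (∀ w₁ w₂, w₁ ≠ w₂ → Disjoint (f w₁) (f w₂)) ∧
    (∀ w₁ w₂, H.Adj w₁ w₂ → ∃ a ∈ f w₁, ∃ b ∈ f w₂, G.Adj a b)

namespace SimpleGraph

variable {V : Type*} {G : SimpleGraph V}

lemma isGraphMinor_top_fin_four {S₁ S₂ S₃ S₄ : Set V}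
    (h₁ : (G.induce S₁).Connected) (h₂ : (G.induce S₂).Connected)
    (h₃ : (G.induce S₃).Connected) (h₄ : (G.induce S₄).Connected)
    (d₁₂ : Disjoint S₁ S₂) (d₁₃ : Disjoint S₁ S₃) (d₁₄ : Disjoint S₁ S₄)
    (d₂₃ : Disjoint S₂ S₃) (d₂₄ : Disjoint S₂ S₄) (d₃₄ : Disjoint S₃ S₄)
    (e₁₂ : ∃ a ∈ S₁, ∃ b ∈ S₂, G.Adj a b) (e₁₃ : ∃ a ∈ S₁, ∃ b ∈ S₃, G.Adj a b)
    (e₁₄ : ∃ a ∈ S₁, ∃ b ∈ S₄, G.Adj a b) (e₂₃ : ∃ a ∈ S₂, ∃ b ∈ S₃, G.Adj a b)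
    (e₂₄ : ∃ a ∈ S₂, ∃ b ∈ S₄, G.Adj a b) (e₃₄ : ∃ a ∈ S₃, ∃ b ∈ S₄, G.Adj a b) :
    IsGraphMinor (⊤ : SimpleGraph (Fin 4)) G := by
  have adj_symm {S T : Set V} : (∃ a ∈ S, ∃ b ∈ T, G.Adj a b) → ∃ a ∈ T, ∃ b ∈ S, G.Adj a b :=
    fun ⟨a, ha, b, hb, hab⟩ => ⟨b, hb, a, ha, hab.symm⟩
  have hconn : ∀ i, (G.induce (![S₁, S₂, S₃, S₄] i)).Connected := by
    intro i; fin_cases i <;> assumption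
  refine ⟨![S₁, S₂, S₃, S₄], fun i => Set.nonempty_coe_sort.mp (hconn i).nonempty, hconn,
    fun i j hij => ?_, fun i j hij => ?_⟩
  · fin_cases i <;> fin_cases j <;> first
      | exact absurd rfl hij | assumption | exact Disjoint.symm (by assumption)
  · fin_cases i <;> fin_cases j <;> first
      | exact absurd rfl hij.ne | assumption | exact adj_symm (by assumption)

lemma connected_induce_of_isChain {l : List V} (hne : l ≠ []) (hl : l.IsChain G.Adj) :
    (G.induce {x | x ∈ l}).Connected := by
  have h := (Walk.ofSupport l hne hl).connected_induce_support
  rwa [Walk.support_ofSupport] at h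

lemma connected_induce_and_exists_adj_of_isChain {a b : V} {l : List V}
    (h : (a :: (l ++ [b])).IsChain G.Adj) :
    (G.induce {x | x ∈ a :: l}).Connected ∧ ∃ x ∈ a :: l, G.Adj x b :=
  ⟨connected_induce_of_isChain (List.cons_ne_nil a l) (h.left_of_append (l₂ := [b])),
    _, List.getLast_mem _, h.rel_getLast_head_of_append (l₁ := a :: l) (l₂ := [b])
      (List.cons_ne_nil a l) (List.cons_ne_nil b [])⟩

lemma Walk.chain_adj_support_tail {u : V} (C : G.Walk u u) :
    Cycle.Chain G.Adj (C.support.tail : Cycle V) := by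
  cases C with
  | nil => simp
  | cons h p =>
    have hrot : p.support ~r u :: p.support.dropLast := by
      rw [← p.dropLast_support_concat]
      simpa using (List.isRotated_append (l := p.support.dropLast) (l' := [u]))
    rw [support_cons, List.tail_cons, Cycle.coe_eq_coe.mpr hrot, Cycle.chain_coe_cons,
      p.dropLast_support_concat, ← support_cons h p]
    exact (cons h p).isChain_adj_support

lemma Walk.IsPath.mem_dropLast_support_iff {u v x : V} {p : G.Walk u v} (hp : p.IsPath)
    (hn : ¬p.Nil) : x ∈ p.dropLast.support ↔ x ∈ p.support ∧ x ≠ v := by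
  have h := hp.support_nodup
  rw [← p.dropLast_support_concat, List.nodup_append] at h
  rw [support_dropLast hn, ← p.dropLast_support_concat, List.dropLast_concat, List.mem_append,
    List.mem_singleton]
  constructor
  · rintro hx
    exact ⟨.inl hx, fun hxv => h.2.2 x hx v (List.mem_singleton_self v) hxv⟩
  · rintro ⟨hx | hx, hxv⟩
    · exact hx
    · exact absurd hx hxv

lemma isGraphMinor_top_fin_four_of_crossing_paths {v₁ v₂ v₃ v₄ : V} {l₁ l₂ l₃ l₄ : List V}
    (hcyc : Cycle.Chain G.Adj (v₁ :: (l₁ ++ v₂ :: (l₂ ++ v₃ :: (l₃ ++ v₄ :: l₄)))))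
    (hnd : (v₁ :: (l₁ ++ v₂ :: (l₂ ++ v₃ :: (l₃ ++ v₄ :: l₄)))).Nodup)
    (P : G.Walk v₁ v₃) (Q : G.Walk v₂ v₄) (hP : P.IsPath) (hQ : Q.IsPath)
    (hPL : ∀ x ∈ P.support, x ≠ v₁ → x ≠ v₃ →
      x ∉ v₁ :: (l₁ ++ v₂ :: (l₂ ++ v₃ :: (l₃ ++ v₄ :: l₄))))
    (hQL : ∀ x ∈ Q.support, x ≠ v₂ → x ≠ v₄ →
      x ∉ v₁ :: (l₁ ++ v₂ :: (l₂ ++ v₃ :: (l₃ ++ v₄ :: l₄))))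
    (hPQ : ∀ x ∈ P.support, x ∉ Q.support) :
    IsGraphMinor (⊤ : SimpleGraph (Fin 4)) G := by
  rw [Cycle.chain_coe_cons] at hcyc
  simp only [List.append_assoc, List.cons_append] at hcyc
  have arc := @connected_induce_and_exists_adj_of_isChain V G
  obtain ⟨⟨c₁, e₁⟩, hcyc⟩ := (List.isChain_cons_split.mp hcyc).imp_left arc
  obtain ⟨⟨c₂, e₂⟩, hcyc⟩ := (List.isChain_cons_split.mp hcyc).imp_left arc
  obtain ⟨⟨c₃, e₃⟩, ⟨c₄, e₄⟩⟩ := (List.isChain_cons_split.mp hcyc).imp arc arc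
  simp only [List.nodup_cons, List.nodup_append, List.mem_append, List.mem_cons] at hnd hPL hQL
  have h₁₃ : v₁ ≠ v₃ := by grind
  have h₂₄ : v₂ ≠ v₄ := by grind
  have hP₀ : ¬P.Nil := Walk.not_nil_of_ne h₁₃
  have hQ₀ : ¬Q.Nil := Walk.not_nil_of_ne h₂₄
  have hP' := fun x => hP.mem_dropLast_support_iff (x := x) hP₀
  have hQ' := fun x => hQ.mem_dropLast_support_iff (x := x) hQ₀
  refine isGraphMinor_top_fin_four
    (S₁ := {x | x ∈ v₁ :: l₁} ∪ {x | x ∈ P.dropLast.support})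
    (S₂ := {x | x ∈ v₂ :: l₂} ∪ {x | x ∈ Q.dropLast.support})
    (induce_union_connected c₁.preconnected P.dropLast.connected_induce_support.preconnected
      ⟨v₁, List.mem_cons_self, P.dropLast.start_mem_support⟩)
    (induce_union_connected c₂.preconnected Q.dropLast.connected_induce_support.preconnected
      ⟨v₂, List.mem_cons_self, Q.dropLast.start_mem_support⟩)
    c₃ c₄ ?d₁₂ ?d₁₃ ?d₁₄ ?d₂₃ ?d₂₄ ?d₃₄ ?e₁₂ ?e₁₃ ?e₁₄ ?e₂₃ ?e₂₄ ?e₃₄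
  case d₁₂ | d₁₃ | d₁₄ | d₂₃ | d₂₄ | d₃₄ =>
    -- The arcs are disjoint since the cycle is, and `P`, `Q` minus their last vertex meet the
    -- cycle only in their first vertex.
    rw [Set.disjoint_left]
    intro x hx hy
    simp only [Set.mem_union, Set.mem_ofPred_eq, List.mem_cons, hP', hQ'] at hx hy
    grind
  case e₁₂ =>
    obtain ⟨x, hx, hadj⟩ := e₁
    exact ⟨x, .inl hx, v₂, .inl List.mem_cons_self, hadj⟩
  case e₂₃ =>
    obtain ⟨x, hx, hadj⟩ := e₂
    exact ⟨x, .inl hx, v₃, List.mem_cons_self, hadj⟩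
  case e₃₄ =>
    obtain ⟨x, hx, hadj⟩ := e₃
    exact ⟨x, hx, v₄, List.mem_cons_self, hadj⟩
  case e₁₄ =>
    obtain ⟨x, hx, hadj⟩ := e₄
    exact ⟨v₁, .inl List.mem_cons_self, x, hx, hadj.symm⟩
  case e₁₃ =>
    exact ⟨_, .inr P.dropLast.end_mem_support, v₃, List.mem_cons_self, P.adj_penultimate hP₀⟩
  case e₂₄ =>
    exact ⟨_, .inr Q.dropLast.end_mem_support, v₄, List.mem_cons_self, Q.adj_penultimate hQ₀⟩

end SimpleGraph

theorem stmt_6_general {V : Type*} (G : SimpleGraph V)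
    (hK4 : ¬ IsGraphMinor (⊤ : SimpleGraph (Fin 4)) G)
    (r : V) (C : G.Walk r r) (hC : C.IsCycle)
    (v₁ v₂ v₃ v₄ : V)
    (horder : ∃ l₁ l₂ l₃ l₄ : List V,
      C.support.tail ~r (v₁ :: (l₁ ++ v₂ :: (l₂ ++ v₃ :: (l₃ ++ v₄ :: l₄))))) :
    ¬ ∃ (P : G.Walk v₁ v₃) (Q : G.Walk v₂ v₄),
        P.IsPath ∧ Q.IsPath ∧
        (∀ x ∈ P.support, x ≠ v₁ → x ≠ v₃ → x ∉ C.support) ∧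
        (∀ x ∈ Q.support, x ≠ v₂ → x ≠ v₄ → x ∉ C.support) ∧
        (∀ e ∈ P.edges, e ∉ C.edges) ∧
        (∀ e ∈ Q.edges, e ∉ C.edges) ∧
        (∀ x ∈ P.support, x ∉ Q.support) := by
  rintro ⟨P, Q, hP, hQ, hPC, hQC, -, -, hPQ⟩
  obtain ⟨l₁, l₂, l₃, l₄, hrot⟩ := horder
  have hmem {x : V} (hx : x ∈ v₁ :: (l₁ ++ v₂ :: (l₂ ++ v₃ :: (l₃ ++ v₄ :: l₄)))) :
      x ∈ C.support :=
    List.mem_of_mem_tail (hrot.mem_iff.mpr hx)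
  refine hK4 (SimpleGraph.isGraphMinor_top_fin_four_of_crossing_paths ?_
    (hrot.nodup_iff.mp hC.support_nodup) P Q hP hQ (fun x hx h₁ h₃ hL => hPC x hx h₁ h₃ (hmem hL))
    (fun x hx h₂ h₄ hL => hQC x hx h₂ h₄ (hmem hL)) hPQ)
  rw [← Cycle.coe_eq_coe.mpr hrot]
  exact C.chain_adj_support_tail

/-- If a finite simple graph `G` has no K₄ minor and `v₁, v₂, v₃, v₄` appear in
this cyclic order on a cycle `C` of `G`, then there do not exist a path from `v₁`
to `v₃` and a path from `v₂` to `v₄`, each internally disjoint from `C` (in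
vertices and in edges) and disjoint from each other. -/
theorem stmt_6 {V : Type*} [Fintype V] (G : SimpleGraph V)
    (hK4 : ¬ IsGraphMinor (⊤ : SimpleGraph (Fin 4)) G)
    (r : V) (C : G.Walk r r) (hC : C.IsCycle)
    (v₁ v₂ v₃ v₄ : V)
    (horder : ∃ l₁ l₂ l₃ l₄ : List V,
      C.support.tail ~r (v₁ :: (l₁ ++ v₂ :: (l₂ ++ v₃ :: (l₃ ++ v₄ :: l₄))))) :
    ¬ ∃ (P : G.Walk v₁ v₃) (Q : G.Walk v₂ v₄),
        P.IsPath ∧ Q.IsPath ∧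
        (∀ x ∈ P.support, x ≠ v₁ → x ≠ v₃ → x ∉ C.support) ∧
        (∀ x ∈ Q.support, x ≠ v₂ → x ≠ v₄ → x ∉ C.support) ∧
        (∀ e ∈ P.edges, e ∉ C.edges) ∧
        (∀ e ∈ Q.edges, e ∉ C.edges) ∧
        (∀ x ∈ P.support, x ∉ Q.support) :=
  stmt_6_general G hK4 r C hC v₁ v₂ v₃ v₄ horder
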